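/- arXiv:1210.2198 — 6 statements merged into one kernel-verified Lean document; each statement's English description precedes it below -/
import Mathlib

section
/- For all x ≥ 0, (1/(√(2π)(1+x))) e^{−x²/2} ≤ 1 − Φ(x) ≤ (1/(√π (1+x))) e^{−x²/2}. -/
/-- The standard normal cumulative distribution function. -/
noncomputable def stdNormalCDF (x : ℝ) : ℝ :=
  (Real.sqrt (2 * Real.pi))⁻¹ * ∫ t in Set.Iic x, Real.exp (-t ^ 2 / 2)

/-! Write `φ t = exp (-t² / 2)` and `r t = (t² + t + 1) / (1 + t)²`. The derivative of
`-φ t / (1 + t)` is `φ t * r t`, so `∫ t in Ioi x, φ t * r t = φ x / (1 + x)`. For `t ≥ 0` we have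
`3 / 4 ≤ r t ≤ 1` (the lower bound is `(t - 1)² ≥ 0`), hence the tail integral of `φ` lies
between `φ x / (1 + x)` and `4 / 3 * φ x / (1 + x)`; it remains to note `4 / 3 ≤ √2`. -/

open Real MeasureTheory Set Filter Topology

lemma integrable_exp_neg_sq_div_two : Integrable (fun t : ℝ => exp (-t ^ 2 / 2)) := by
  refine (integrable_exp_neg_mul_sq (by norm_num : (0 : ℝ) < 1 / 2)).congr
    (Eventually.of_forall fun t => ?_)
  ring_nf

lemma integral_exp_neg_sq_div_two : ∫ t : ℝ, exp (-t ^ 2 / 2) = √(2 * π) := by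
  have h := integral_gaussian (1 / 2)
  rw [show π / (1 / 2) = 2 * π by ring] at h
  rw [← h]
  exact integral_congr_ae (Eventually.of_forall fun t => by ring_nf)

lemma one_sub_stdNormalCDF_eq (x : ℝ) :
    1 - stdNormalCDF x = (√(2 * π))⁻¹ * ∫ t in Ioi x, exp (-t ^ 2 / 2) := by
  have hsplit := intervalIntegral.integral_Iic_add_Ioi (b := x)
    integrable_exp_neg_sq_div_two.integrableOn integrable_exp_neg_sq_div_two.integrableOn
  rw [integral_exp_neg_sq_div_two] at hsplit
  have hs : √(2 * π) ≠ 0 := (sqrt_pos.mpr (by positivity)).ne'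
  rw [stdNormalCDF, eq_sub_of_add_eq hsplit, mul_sub, inv_mul_cancel₀ hs]
  ring

lemma hasDerivAt_neg_exp_neg_sq_div_two_div_one_add {t : ℝ} (ht : 1 + t ≠ 0) :
    HasDerivAt (fun t : ℝ => -(exp (-t ^ 2 / 2) / (1 + t)))
      (exp (-t ^ 2 / 2) * ((t ^ 2 + t + 1) / (1 + t) ^ 2)) t := by
  have hexp : HasDerivAt (fun t : ℝ => exp (-t ^ 2 / 2)) (exp (-t ^ 2 / 2) * (-t)) t :=
    (((hasDerivAt_pow 2 t).neg.div_const 2).congr_deriv (by ring)).exp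
  refine ((hexp.div ((hasDerivAt_id t).const_add 1) ht).neg).congr_deriv ?_
  simp only [id]
  field_simp
  ring

lemma tendsto_exp_neg_sq_div_two_div_one_add_atTop :
    Tendsto (fun t : ℝ => exp (-t ^ 2 / 2) / (1 + t)) atTop (𝓝 0) := by
  have hexp : Tendsto (fun t : ℝ => exp (-t ^ 2 / 2)) atTop (𝓝 0) :=
    tendsto_exp_atBot.comp <| Tendsto.atBot_div_const (by norm_num) <|
      tendsto_neg_atBot_iff.mpr (tendsto_pow_atTop two_ne_zero)
  have hinv : Tendsto (fun t : ℝ => (1 + t)⁻¹) atTop (𝓝 0) :=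
    tendsto_inv_atTop_zero.comp (tendsto_atTop_add_const_left _ 1 tendsto_id)
  simpa [div_eq_mul_inv] using hexp.mul hinv

lemma div_one_add_sq_le_one {t : ℝ} (ht : 0 ≤ t) : (t ^ 2 + t + 1) / (1 + t) ^ 2 ≤ 1 := by
  rw [div_le_one (by positivity)]
  nlinarith

lemma three_div_four_le_div_one_add_sq {t : ℝ} (ht : 1 + t ≠ 0) :
    3 / 4 ≤ (t ^ 2 + t + 1) / (1 + t) ^ 2 := by
  rw [le_div_iff₀ (by positivity)]
  nlinarith [sq_nonneg (t - 1)]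

lemma integrableOn_Ioi_exp_neg_sq_div_two_mul {x : ℝ} (hx : -1 < x) :
    IntegrableOn (fun t : ℝ => exp (-t ^ 2 / 2) * ((t ^ 2 + t + 1) / (1 + t) ^ 2)) (Ioi x) :=
  integrableOn_Ioi_deriv_of_nonneg'
    (fun t ht => hasDerivAt_neg_exp_neg_sq_div_two_div_one_add (by linarith [mem_Ici.mp ht]))
    (fun t ht => mul_nonneg (exp_pos _).le
      (by linarith [three_div_four_le_div_one_add_sq (by linarith [mem_Ioi.mp ht] : 1 + t ≠ 0)]))
    tendsto_exp_neg_sq_div_two_div_one_add_atTop.neg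

lemma integral_Ioi_exp_neg_sq_div_two_mul {x : ℝ} (hx : -1 < x) :
    ∫ t in Ioi x, exp (-t ^ 2 / 2) * ((t ^ 2 + t + 1) / (1 + t) ^ 2) =
      exp (-x ^ 2 / 2) / (1 + x) := by
  rw [integral_Ioi_of_hasDerivAt_of_tendsto'
    (fun t ht => hasDerivAt_neg_exp_neg_sq_div_two_div_one_add (by linarith [mem_Ici.mp ht]))
    (integrableOn_Ioi_exp_neg_sq_div_two_mul hx)
    tendsto_exp_neg_sq_div_two_div_one_add_atTop.neg]
  ring

lemma exp_neg_sq_div_two_div_one_add_le_integral_Ioi {x : ℝ} (hx : 0 ≤ x) :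
    exp (-x ^ 2 / 2) / (1 + x) ≤ ∫ t in Ioi x, exp (-t ^ 2 / 2) := by
  have hx' : -1 < x := by linarith
  rw [← integral_Ioi_exp_neg_sq_div_two_mul hx']
  refine setIntegral_mono_on (integrableOn_Ioi_exp_neg_sq_div_two_mul hx')
    integrable_exp_neg_sq_div_two.integrableOn measurableSet_Ioi fun t ht => ?_
  exact mul_le_of_le_one_right (exp_pos _).le
    (div_one_add_sq_le_one (hx.trans (mem_Ioi.mp ht).le))

lemma integral_Ioi_exp_neg_sq_div_two_le {x : ℝ} (hx : -1 < x) :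
    ∫ t in Ioi x, exp (-t ^ 2 / 2) ≤ 4 / 3 * (exp (-x ^ 2 / 2) / (1 + x)) := by
  rw [← integral_Ioi_exp_neg_sq_div_two_mul hx, ← integral_const_mul]
  refine setIntegral_mono_on integrable_exp_neg_sq_div_two.integrableOn
    ((integrableOn_Ioi_exp_neg_sq_div_two_mul hx).const_mul _) measurableSet_Ioi fun t ht => ?_
  have hr := three_div_four_le_div_one_add_sq (by linarith [mem_Ioi.mp ht] : 1 + t ≠ 0)
  nlinarith [exp_pos (-t ^ 2 / 2)]

theorem gaussian_tail_two_sided (x : ℝ) (hx : 0 ≤ x) :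
    (Real.sqrt (2 * Real.pi) * (1 + x))⁻¹ * Real.exp (-x ^ 2 / 2) ≤ 1 - stdNormalCDF x ∧
    1 - stdNormalCDF x ≤ (Real.sqrt Real.pi * (1 + x))⁻¹ * Real.exp (-x ^ 2 / 2) := by
  have hsqrt2 : 4 / 3 ≤ √2 := le_sqrt_of_sq_le (by norm_num)
  rw [one_sub_stdNormalCDF_eq]
  constructor
  · calc (√(2 * π) * (1 + x))⁻¹ * exp (-x ^ 2 / 2)
        = (√(2 * π))⁻¹ * (exp (-x ^ 2 / 2) / (1 + x)) := by rw [mul_inv]; ring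
      _ ≤ _ := by gcongr; exact exp_neg_sq_div_two_div_one_add_le_integral_Ioi hx
  · calc (√(2 * π))⁻¹ * ∫ t in Ioi x, exp (-t ^ 2 / 2)
        ≤ (√(2 * π))⁻¹ * (4 / 3 * (exp (-x ^ 2 / 2) / (1 + x))) := by
          gcongr; exact integral_Ioi_exp_neg_sq_div_two_le (by linarith)
      _ = 4 / 3 / √2 * ((√π * (1 + x))⁻¹ * exp (-x ^ 2 / 2)) := by
          rw [sqrt_mul zero_le_two, mul_inv, mul_inv]; ring
      _ ≤ (√π * (1 + x))⁻¹ * exp (-x ^ 2 / 2) :=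
          mul_le_of_le_one_left (by positivity) (div_le_one_of_le₀ hsqrt2 (sqrt_nonneg _))
end

section
/- Let ξ be a real random variable and 𝒢 a sub-σ-field with E[ξ | 𝒢] = 0, and suppose |E[ξ^k | 𝒢]| ≤ (1/2) k! ε^{k−2} E[ξ² | 𝒢] a.s. for all k ≥ 3, where ε ∈ (0, 1/2]. Then for every integer k ≥ 2, |E[ξ^k | 𝒢]| ≤ 6 k! ε^k almost surely. -/
/-!
The whole statement reduces to the bound `E[ξ² | 𝒢] ≤ 12 ε²`, after which the Bernstein
condition gives `|E[ξ^k | 𝒢]| ≤ ½ k! ε^(k-2) · 12 ε² = 6 k! ε^k`. For that bound, apply the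
Bernstein condition at `k = 4`, `E[ξ⁴ | 𝒢] ≤ b E[ξ² | 𝒢]` with `b = 12 ε²`, and condition the
pointwise inequality `x² ≤ x⁴ / (2b) + b / 2`: this gives `E[ξ² | 𝒢] ≤ E[ξ² | 𝒢] / 2 + b / 2`.
-/

open MeasureTheory

lemma sq_le_inv_mul_pow_four_add_half (x : ℝ) {b : ℝ} (hb : 0 < b) :
    x ^ 2 ≤ (2 * b)⁻¹ * x ^ 4 + b / 2 := by
  have key : 2 * b * x ^ 2 ≤ x ^ 4 + b ^ 2 := by nlinarith [sq_nonneg (x ^ 2 - b)]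
  rw [inv_mul_eq_div, div_add_div _ _ (by positivity) two_ne_zero, le_div_iff₀ (by positivity)]
  nlinarith

section CondExp

variable {Ω : Type*} {m m0 : MeasurableSpace Ω} {μ : Measure Ω}

lemma condExp_const_mul_add_const [IsFiniteMeasure μ] (hm : m ≤ m0) {f : Ω → ℝ}
    (hf : Integrable f μ) (c d : ℝ) :
    μ[fun ω => c * f ω + d|m] =ᵐ[μ] fun ω => c * μ[f|m] ω + d := by
  have hadd : μ[fun ω => c * f ω + d|m] =ᵐ[μ] μ[c • f|m] + μ[fun _ => d|m] :=
    condExp_add (hf.const_mul c) (integrable_const d) m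
  filter_upwards [hadd, condExp_smul (μ := μ) c f m] with ω hω hsmul
  simp only [hω, hsmul, condExp_const hm, Pi.add_apply, Pi.smul_apply, smul_eq_mul]

lemma condExp_sq_le_of_condExp_pow_four_le [IsFiniteMeasure μ] (hm : m ≤ m0) {ξ : Ω → ℝ}
    (hint2 : Integrable (fun ω => ξ ω ^ 2) μ) (hint4 : Integrable (fun ω => ξ ω ^ 4) μ)
    {b : ℝ} (hb : 0 < b)
    (h4 : ∀ᵐ ω ∂μ, μ[fun ω => ξ ω ^ 4|m] ω ≤ b * μ[fun ω => ξ ω ^ 2|m] ω) :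
    ∀ᵐ ω ∂μ, μ[fun ω => ξ ω ^ 2|m] ω ≤ b := by
  have hmono : μ[fun ω => ξ ω ^ 2|m] ≤ᵐ[μ] μ[fun ω => (2 * b)⁻¹ * ξ ω ^ 4 + b / 2|m] :=
    condExp_mono hint2 ((hint4.const_mul _).add (integrable_const _))
      (.of_forall fun ω => sq_le_inv_mul_pow_four_add_half (ξ ω) hb)
  filter_upwards [hmono, condExp_const_mul_add_const hm hint4 (2 * b)⁻¹ (b / 2), h4]
    with ω hω hlin h4ω
  have hhalf : μ[fun ω => ξ ω ^ 2|m] ω ≤ μ[fun ω => ξ ω ^ 2|m] ω / 2 + b / 2 :=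
    calc μ[fun ω => ξ ω ^ 2|m] ω
        ≤ (2 * b)⁻¹ * μ[fun ω => ξ ω ^ 4|m] ω + b / 2 := hlin ▸ hω
      _ ≤ (2 * b)⁻¹ * (b * μ[fun ω => ξ ω ^ 2|m] ω) + b / 2 := by gcongr
      _ = μ[fun ω => ξ ω ^ 2|m] ω / 2 + b / 2 := by field_simp
  linarith

end CondExp

theorem condMoment_abs_le_of_bernstein_general {Ω : Type*} {m0 : MeasurableSpace Ω} {μ : Measure Ω}
    [IsProbabilityMeasure μ] {m : MeasurableSpace Ω} (hm : m ≤ m0) (ξ : Ω → ℝ)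
    (hint : ∀ k : ℕ, Integrable (fun ω => ξ ω ^ k) μ)
    (ε : ℝ) (hε : ε ∈ Set.Ioc (0 : ℝ) (1 / 2))
    (hB : ∀ k : ℕ, 3 ≤ k → ∀ᵐ ω ∂μ,
      |(μ[fun ω => ξ ω ^ k|m]) ω| ≤
        (1 / 2) * (Nat.factorial k : ℝ) * ε ^ (k - 2) * (μ[fun ω => ξ ω ^ 2|m]) ω) :
    ∀ k : ℕ, 2 ≤ k → ∀ᵐ ω ∂μ,
      |(μ[fun ω => ξ ω ^ k|m]) ω| ≤ 6 * (Nat.factorial k : ℝ) * ε ^ k := by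
  have hV : ∀ᵐ ω ∂μ, μ[fun ω => ξ ω ^ 2|m] ω ≤ 12 * ε ^ 2 := by
    refine condExp_sq_le_of_condExp_pow_four_le hm (hint 2) (hint 4) (by positivity [hε.1]) ?_
    filter_upwards [hB 4 (by norm_num)] with ω hω
    have : (1 / 2 : ℝ) * (Nat.factorial 4 : ℝ) * ε ^ (4 - 2) = 12 * ε ^ 2 := by
      norm_num [Nat.factorial]
    exact (le_abs_self _).trans (this ▸ hω)
  have hV0 : 0 ≤ᵐ[μ] μ[fun ω => ξ ω ^ 2|m] := condExp_nonneg (.of_forall fun ω => sq_nonneg _)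
  intro k hk
  obtain rfl | hk3 := hk.eq_or_lt
  · filter_upwards [hV, hV0] with ω hω hω0
    rw [abs_of_nonneg hω0]
    norm_num [Nat.factorial]
    linarith
  · filter_upwards [hB k hk3, hV] with ω hω hVω
    calc |μ[fun ω => ξ ω ^ k|m] ω|
        ≤ (1 / 2) * (Nat.factorial k : ℝ) * ε ^ (k - 2) * μ[fun ω => ξ ω ^ 2|m] ω := hω
      _ ≤ (1 / 2) * (Nat.factorial k : ℝ) * ε ^ (k - 2) * (12 * ε ^ 2) := by
        have := hε.1.le
        gcongr
      _ = 6 * (Nat.factorial k : ℝ) * ε ^ k := by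
        rw [show k = (k - 2) + 2 by omega, pow_add, Nat.add_sub_cancel]
        ring

theorem condMoment_abs_le_of_bernstein {Ω : Type*} {m0 : MeasurableSpace Ω} {μ : Measure Ω}
    [IsProbabilityMeasure μ] {m : MeasurableSpace Ω} (hm : m ≤ m0) (ξ : Ω → ℝ)
    (hint : ∀ k : ℕ, Integrable (fun ω => ξ ω ^ k) μ)
    (hcenter : μ[ξ|m] =ᵐ[μ] 0)
    (ε : ℝ) (hε : ε ∈ Set.Ioc (0 : ℝ) (1 / 2))
    (hB : ∀ k : ℕ, 3 ≤ k → ∀ᵐ ω ∂μ,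
      |(μ[fun ω => ξ ω ^ k|m]) ω| ≤
        (1 / 2) * (Nat.factorial k : ℝ) * ε ^ (k - 2) * (μ[fun ω => ξ ω ^ 2|m]) ω) :
    ∀ k : ℕ, 2 ≤ k → ∀ᵐ ω ∂μ,
      |(μ[fun ω => ξ ω ^ k|m]) ω| ≤ 6 * (Nat.factorial k : ℝ) * ε ^ k :=
  condMoment_abs_le_of_bernstein_general hm ξ hint ε hε hB
end

section
/- Let ξ be a real random variable and 𝒢 a sub-σ-field with E[ξ | 𝒢] = 0, satisfying |E[ξ^k | 𝒢]| ≤ (1/2) k! ε^{k−2} E[ξ² | 𝒢] a.s. for all k ≥ 3 with ε ∈ (0, 1/2]. Then for every integer k ≥ 2, E[|ξ|^k | 𝒢] ≤ k! ε^{k−2} E[ξ² | 𝒢] almost surely. -/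
/-!
Even absolute moments are plain moments, so for even `k` the claim is the Bernstein bound itself
(for `k = 2` it is trivial). For odd `k = 2n + 1` the pointwise AM-GM inequality
`2 a |x|^(2n+1) ≤ a² x^(2n) + x^(2n+2)` passes to conditional expectations by monotonicity and
linearity, bounding the odd absolute moment by the two neighbouring even moments; the choice
`a = (n + 1) ε` makes the resulting factorial bound come out as `(2n+1)! ε^(2n-1) E[ξ² | 𝒢]`.
-/

open MeasureTheory

theorem two_mul_mul_abs_pow_odd_le (a x : ℝ) (n : ℕ) :
    2 * a * |x| ^ (2 * n + 1) ≤ a ^ 2 * x ^ (2 * n) + x ^ (2 * n + 2) := by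
  have h_even (j : ℕ) : x ^ (2 * j) = |x| ^ j * |x| ^ j := by
    rw [← pow_add, ← two_mul, (even_two_mul j).pow_abs]
  have h_odd : |x| ^ (2 * n + 1) = |x| ^ n * |x| ^ (n + 1) := by rw [← pow_add]; ring_nf
  rw [h_odd, h_even, show 2 * n + 2 = 2 * (n + 1) by ring, h_even]
  nlinarith [sq_nonneg (a * |x| ^ n - |x| ^ (n + 1))]

theorem factorial_bound_odd_of_even (l : ℕ) {ε E : ℝ} (hε : 0 ≤ ε) (hE : 0 ≤ E) :
    (ε * (l + 2)) ^ 2 * ((2 * l + 2).factorial * ε ^ (2 * l) * E) +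
        1 / 2 * (2 * l + 4).factorial * ε ^ (2 * l + 2) * E ≤
      2 * (ε * (l + 2)) * ((2 * l + 3).factorial * ε ^ (2 * l + 1) * E) := by
  rw [← sub_nonneg]
  have h_gap : 2 * (ε * (l + 2)) * ((2 * l + 3).factorial * ε ^ (2 * l + 1) * E) -
      ((ε * (l + 2)) ^ 2 * ((2 * l + 2).factorial * ε ^ (2 * l) * E) +
        1 / 2 * (2 * l + 4).factorial * ε ^ (2 * l + 2) * E) =
      (l + 1) * (l + 2) * (2 * l + 2).factorial * ε ^ (2 * l + 2) * E := by
    simp only [Nat.factorial_succ]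
    push_cast
    ring
  rw [h_gap]
  positivity

section

variable {Ω : Type*} {m m0 : MeasurableSpace Ω} {μ : Measure Ω} {ξ : Ω → ℝ}

theorem condExp_abs_pow_odd_le (a : ℝ) (n : ℕ)
    (h_odd : Integrable (fun ω => |ξ ω| ^ (2 * n + 1)) μ)
    (h_low : Integrable (fun ω => ξ ω ^ (2 * n)) μ)
    (h_high : Integrable (fun ω => ξ ω ^ (2 * n + 2)) μ) :
    ∀ᵐ ω ∂μ, 2 * a * (μ[fun ω => |ξ ω| ^ (2 * n + 1)|m]) ω ≤
      a ^ 2 * (μ[fun ω => ξ ω ^ (2 * n)|m]) ω + (μ[fun ω => ξ ω ^ (2 * n + 2)|m]) ω := by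
  have h_mono : μ[(2 * a) • fun ω => |ξ ω| ^ (2 * n + 1)|m] ≤ᵐ[μ]
      μ[(a ^ 2) • (fun ω => ξ ω ^ (2 * n)) + fun ω => ξ ω ^ (2 * n + 2)|m] :=
    condExp_mono (h_odd.smul _) ((h_low.smul _).add h_high)
      (ae_of_all _ fun ω => two_mul_mul_abs_pow_odd_le a (ξ ω) n)
  filter_upwards [h_mono, condExp_smul (2 * a) (fun ω => |ξ ω| ^ (2 * n + 1)) m,
    condExp_add (h_low.smul (a ^ 2)) h_high m, condExp_smul (a ^ 2) (fun ω => ξ ω ^ (2 * n)) m]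
    with ω h_mono h_lhs h_add h_smul
  simpa [h_lhs, h_add, h_smul] using h_mono

theorem condExp_pow_le_of_bernstein {ε : ℝ} (hε : 0 ≤ ε)
    (hB : ∀ k : ℕ, 3 ≤ k → ∀ᵐ ω ∂μ,
      |(μ[fun ω => ξ ω ^ k|m]) ω| ≤
        (1 / 2) * (Nat.factorial k : ℝ) * ε ^ (k - 2) * (μ[fun ω => ξ ω ^ 2|m]) ω)
    {k : ℕ} (hk : 2 ≤ k) :
    ∀ᵐ ω ∂μ, (μ[fun ω => ξ ω ^ k|m]) ω ≤
      (Nat.factorial k : ℝ) * ε ^ (k - 2) * (μ[fun ω => ξ ω ^ 2|m]) ω := by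
  have h_sq : ∀ᵐ ω ∂μ, 0 ≤ (μ[fun ω => ξ ω ^ 2|m]) ω :=
    condExp_nonneg (ae_of_all _ fun ω => sq_nonneg _)
  obtain rfl | hk := hk.eq_or_lt
  · filter_upwards [h_sq] with ω h_sq
    simp only [Nat.sub_self, pow_zero, mul_one, Nat.factorial_two, Nat.cast_ofNat]
    linarith
  · filter_upwards [hB k hk, h_sq] with ω hB h_sq
    have : 0 ≤ (Nat.factorial k : ℝ) * ε ^ (k - 2) * (μ[fun ω => ξ ω ^ 2|m]) ω := by
      positivity
    linarith [le_abs_self ((μ[fun ω => ξ ω ^ k|m]) ω)]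

theorem condExp_abs_pow_odd_le_of_bernstein {ε : ℝ} (hε : 0 < ε) (l : ℕ)
    (hint : ∀ k : ℕ, Integrable (fun ω => ξ ω ^ k) μ)
    (hint_odd : Integrable (fun ω => |ξ ω| ^ (2 * l + 3)) μ)
    (hB : ∀ k : ℕ, 3 ≤ k → ∀ᵐ ω ∂μ,
      |(μ[fun ω => ξ ω ^ k|m]) ω| ≤
        (1 / 2) * (Nat.factorial k : ℝ) * ε ^ (k - 2) * (μ[fun ω => ξ ω ^ 2|m]) ω) :
    ∀ᵐ ω ∂μ, (μ[fun ω => |ξ ω| ^ (2 * l + 3)|m]) ω ≤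
      (2 * l + 3).factorial * ε ^ (2 * l + 1) * (μ[fun ω => ξ ω ^ 2|m]) ω := by
  set a := ε * (l + 2)
  have h_amgm := condExp_abs_pow_odd_le (m := m) a (l + 1) hint_odd (hint _) (hint _)
  rw [show 2 * (l + 1) = 2 * l + 2 by ring] at h_amgm
  filter_upwards [h_amgm,
    condExp_pow_le_of_bernstein hε.le hB (k := 2 * l + 2) (by omega),
    hB (2 * l + 4) (by omega), condExp_nonneg (m := m) (ae_of_all _ fun ω => sq_nonneg (ξ ω))]
    with ω h_amgm h_low h_high h_sq
  rw [show 2 * l + 2 - 2 = 2 * l by omega] at h_low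
  rw [show 2 * l + 4 - 2 = 2 * l + 2 by omega] at h_high
  refine le_of_mul_le_mul_left ?_ (by positivity : 0 < 2 * a)
  linarith [factorial_bound_odd_of_even l hε.le h_sq,
    le_abs_self (μ[fun ω => ξ ω ^ (2 * l + 4)|m] ω),
    mul_le_mul_of_nonneg_left h_low (sq_nonneg a)]

end

theorem condAbsMoment_le_of_bernstein_general {Ω : Type*} {m0 : MeasurableSpace Ω} {μ : Measure Ω}
    {m : MeasurableSpace Ω} (ξ : Ω → ℝ)
    (hint : ∀ k : ℕ, Integrable (fun ω => ξ ω ^ k) μ)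
    (hintabs : ∀ k : ℕ, Integrable (fun ω => |ξ ω| ^ k) μ)
    (ε : ℝ) (hε : ε ∈ Set.Ioc (0 : ℝ) (1 / 2))
    (hB : ∀ k : ℕ, 3 ≤ k → ∀ᵐ ω ∂μ,
      |(μ[fun ω => ξ ω ^ k|m]) ω| ≤
        (1 / 2) * (Nat.factorial k : ℝ) * ε ^ (k - 2) * (μ[fun ω => ξ ω ^ 2|m]) ω) :
    ∀ k : ℕ, 2 ≤ k → ∀ᵐ ω ∂μ,
      (μ[fun ω => |ξ ω| ^ k|m]) ω ≤
        (Nat.factorial k : ℝ) * ε ^ (k - 2) * (μ[fun ω => ξ ω ^ 2|m]) ω := by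
  intro k hk
  obtain ⟨n, rfl | rfl⟩ := Nat.even_or_odd' k
  · simp_rw [(even_two_mul n).pow_abs]
    exact condExp_pow_le_of_bernstein hε.1.le hB hk
  obtain ⟨l, rfl⟩ : ∃ l, n = l + 1 := ⟨n - 1, by omega⟩
  rw [show 2 * (l + 1) + 1 = 2 * l + 3 by ring, show 2 * l + 3 - 2 = 2 * l + 1 by omega]
  exact condExp_abs_pow_odd_le_of_bernstein hε.1 l hint (hintabs _) hB

theorem condAbsMoment_le_of_bernstein {Ω : Type*} {m0 : MeasurableSpace Ω} {μ : Measure Ω}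
    [IsProbabilityMeasure μ] {m : MeasurableSpace Ω} (hm : m ≤ m0) (ξ : Ω → ℝ)
    (hint : ∀ k : ℕ, Integrable (fun ω => ξ ω ^ k) μ)
    (hintabs : ∀ k : ℕ, Integrable (fun ω => |ξ ω| ^ k) μ)
    (hcenter : μ[ξ|m] =ᵐ[μ] 0)
    (ε : ℝ) (hε : ε ∈ Set.Ioc (0 : ℝ) (1 / 2))
    (hB : ∀ k : ℕ, 3 ≤ k → ∀ᵐ ω ∂μ,
      |(μ[fun ω => ξ ω ^ k|m]) ω| ≤
        (1 / 2) * (Nat.factorial k : ℝ) * ε ^ (k - 2) * (μ[fun ω => ξ ω ^ 2|m]) ω) :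
    ∀ k : ℕ, 2 ≤ k → ∀ᵐ ω ∂μ,
      (μ[fun ω => |ξ ω| ^ k|m]) ω ≤
        (Nat.factorial k : ℝ) * ε ^ (k - 2) * (μ[fun ω => ξ ω ^ 2|m]) ω :=
  condAbsMoment_le_of_bernstein_general (m0 := m0) ξ hint hintabs ε hε hB
end

section
/- Let η be a real random variable satisfying the Bernstein condition: there exists H > 0 such that |E[η^k]| ≤ (1/2) k! H^{k−2} E[η²] for all integers k ≥ 3. Then there exists a constant K > 0 such that K · E[|η|³ e^{K|η|}] ≤ E[η²] (Sakhanenko's condition). -/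
/-!
Expanding the exponential, `E[|η|³ e^{K|η|}] = ∑ₖ Kᵏ/k! · E|η|^{k+3}`. Bernstein's condition bounds
the even absolute moments directly, and the odd ones through
`2H|x|^{2i+3} ≤ |x|^{2i+4} + H²|x|^{2i+2}`, so that `E|η|^{k+2} ≤ ½ (k+3)! Hᵏ E[η²]` for all `k`.
As `(k+4)! ≤ 384 · 2ᵏ · k!`, the series is dominated by a geometric series of ratio `2KH`,
and `K = 1/(256 H)` makes `K` times its sum at most `E[η²]`.
-/

open MeasureTheory Nat

theorem Nat.factorial_add_le_two_pow_mul (m n : ℕ) : (m + n)! ≤ 2 ^ (m + n) * m ! * n ! := by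
  rw [← add_choose_mul_factorial_mul_factorial, mul_assoc, mul_assoc]
  exact Nat.mul_le_mul_right _ (choose_le_two_pow _ _)

theorem two_mul_mul_pow_succ_le {x : ℝ} (hx : 0 ≤ x) (H : ℝ) (n : ℕ) :
    2 * H * x ^ (n + 1) ≤ x ^ (n + 2) + H ^ 2 * x ^ n := by
  have hsq : x ^ (n + 2) + H ^ 2 * x ^ n - 2 * H * x ^ (n + 1) = x ^ n * (x - H) ^ 2 := by ring
  nlinarith [mul_nonneg (pow_nonneg hx n) (sq_nonneg (x - H))]

theorem Real.hasSum_pow_mul_exp (n : ℕ) (a x : ℝ) :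
    HasSum (fun k => a ^ k / k ! * x ^ (k + n)) (x ^ n * Real.exp (a * x)) := by
  have h := (NormedSpace.expSeries_div_hasSum_exp (a * x)).mul_left (x ^ n)
  rw [← Real.exp_eq_exp_ℝ] at h
  refine h.congr_fun fun k => ?_
  rw [mul_pow, pow_add]
  ring

theorem MeasureTheory.integrable_and_hasSum_integral_of_nonneg {α : Type*} [MeasurableSpace α]
    {μ : Measure α} {f : ℕ → α → ℝ} {F : α → ℝ} (hf : ∀ n, Integrable (f n) μ)
    (hf_nonneg : ∀ n x, 0 ≤ f n x) (hF : ∀ x, HasSum (f · x) (F x))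
    (h_sum : Summable fun n => ∫ x, f n x ∂μ) :
    Integrable F μ ∧ HasSum (fun n => ∫ x, f n x ∂μ) (∫ x, F x ∂μ) := by
  have h_norm : (fun n => ∫ x, ‖f n x‖ ∂μ) = fun n => ∫ x, f n x ∂μ := funext fun n =>
    integral_congr_ae (.of_forall fun x => Real.norm_of_nonneg (hf_nonneg n x))
  have h_tsum : ∀ x, ∑' n, f n x = F x := fun x => (hF x).tsum_eq
  have h_lintegral : ∫⁻ x, ENNReal.ofReal (F x) ∂μ = ∑' n, ENNReal.ofReal (∫ x, f n x ∂μ) := by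
    simp_rw [← h_tsum, ENNReal.ofReal_tsum_of_nonneg (hf_nonneg · _) (hF _).summable]
    rw [lintegral_tsum fun n => (hf n).aemeasurable.ennreal_ofReal]
    exact tsum_congr fun n =>
      (ofReal_integral_eq_lintegral_ofReal (hf n) (.of_forall (hf_nonneg n))).symm
  have h_meas : AEStronglyMeasurable F μ :=
    aestronglyMeasurable_of_tendsto_ae Filter.atTop
      (fun n => (Finset.range n).aestronglyMeasurable_fun_sum fun i _ => (hf i).1)
      (.of_forall fun x => (hF x).tendsto_sum_nat)
  refine ⟨⟨h_meas, ?_⟩, ?_⟩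
  · rw [hasFiniteIntegral_iff_ofReal (.of_forall fun x => (hF x).nonneg (hf_nonneg · x)),
      h_lintegral, ← ENNReal.ofReal_tsum_of_nonneg (fun n => integral_nonneg (hf_nonneg n)) h_sum]
    exact ENNReal.ofReal_lt_top
  · simpa only [h_tsum] using hasSum_integral_of_summable_integral_norm hf (h_norm ▸ h_sum)

def BernsteinCondition {Ω : Type*} [MeasurableSpace Ω] (μ : Measure Ω) (f : Ω → ℝ) (H : ℝ) :
    Prop :=
  ∀ k : ℕ, 3 ≤ k → |∫ ω, f ω ^ k ∂μ| ≤ (1 / 2) * (k ! : ℝ) * H ^ (k - 2) * ∫ ω, f ω ^ 2 ∂μ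

namespace BernsteinCondition

variable {Ω : Type*} [MeasurableSpace Ω] {μ : Measure Ω} {f : Ω → ℝ} {H : ℝ}

theorem integral_abs_pow_even_le (hB : BernsteinCondition μ f H) (i : ℕ) :
    ∫ ω, |f ω| ^ (2 * i + 2) ∂μ ≤ (1 / 2) * ((2 * i + 2)! : ℝ) * H ^ (2 * i) * ∫ ω, f ω ^ 2 ∂μ := by
  have h_even (x : ℝ) : |x| ^ (2 * i + 2) = x ^ (2 * i + 2) := Even.pow_abs ⟨i + 1, by ring⟩ x
  simp only [h_even]
  rcases i with _ | i
  · norm_num [factorial]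
  · calc ∫ ω, f ω ^ (2 * (i + 1) + 2) ∂μ ≤ |∫ ω, f ω ^ (2 * (i + 1) + 2) ∂μ| := le_abs_self _
      _ ≤ _ := hB _ (by omega)

theorem integral_abs_pow_odd_le (hB : BernsteinCondition μ f H) (hH : 0 < H)
    (hint : ∀ k : ℕ, Integrable (fun ω => |f ω| ^ k) μ) (i : ℕ) :
    ∫ ω, |f ω| ^ (2 * i + 3) ∂μ
      ≤ (1 / 2) * ((2 * i + 4)! : ℝ) * H ^ (2 * i + 1) * ∫ ω, f ω ^ 2 ∂μ := by
  set V := ∫ ω, f ω ^ 2 ∂μ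
  have hV : 0 ≤ V := integral_nonneg fun ω => sq_nonneg _
  have h_amgm : 2 * H * ∫ ω, |f ω| ^ (2 * i + 3) ∂μ
      ≤ ∫ ω, |f ω| ^ (2 * i + 4) ∂μ + H ^ 2 * ∫ ω, |f ω| ^ (2 * i + 2) ∂μ := by
    rw [← integral_const_mul, ← integral_const_mul, ← integral_add (hint _) ((hint _).const_mul _)]
    exact integral_mono ((hint _).const_mul _) ((hint _).add ((hint _).const_mul _))
      fun ω => two_mul_mul_pow_succ_le (abs_nonneg (f ω)) H (2 * i + 2)
  have h_high := hB.integral_abs_pow_even_le (i + 1)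
  have h_low := hB.integral_abs_pow_even_le i
  have h_fact : ((2 * i + 2)! : ℝ) ≤ (2 * i + 4)! := by
    exact_mod_cast factorial_le (by omega)
  have hHV : 0 ≤ H ^ (2 * i + 2) * V := by positivity
  refine le_of_mul_le_mul_left (h_amgm.trans ?_) (by positivity : 0 < 2 * H)
  calc _ ≤ (1 / 2) * ((2 * i + 4)! : ℝ) * H ^ (2 * i + 2) * V
        + H ^ 2 * ((1 / 2) * ((2 * i + 2)! : ℝ) * H ^ (2 * i) * V) := by
        gcongr
        simpa [mul_add, add_assoc] using h_high
    _ = (1 / 2) * (((2 * i + 4)! : ℝ) + (2 * i + 2)!) * (H ^ (2 * i + 2) * V) := by ring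
    _ ≤ ((2 * i + 4)! : ℝ) * (H ^ (2 * i + 2) * V) := by
        nlinarith [mul_le_mul_of_nonneg_right h_fact hHV]
    _ = _ := by ring

theorem integral_abs_pow_le (hB : BernsteinCondition μ f H) (hH : 0 < H)
    (hint : ∀ k : ℕ, Integrable (fun ω => |f ω| ^ k) μ) (k : ℕ) :
    ∫ ω, |f ω| ^ (k + 2) ∂μ ≤ (1 / 2) * ((k + 3)! : ℝ) * H ^ k * ∫ ω, f ω ^ 2 ∂μ := by
  obtain ⟨i, rfl | rfl⟩ := k.even_or_odd'
  · refine (hB.integral_abs_pow_even_le i).trans ?_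
    have h_fact : ((2 * i + 2)! : ℝ) ≤ (2 * i + 3)! := by exact_mod_cast factorial_le (by omega)
    have hV : 0 ≤ ∫ ω, f ω ^ 2 ∂μ := integral_nonneg fun ω => sq_nonneg _
    gcongr
  · exact hB.integral_abs_pow_odd_le hH hint i

theorem integral_pow_div_factorial_mul_abs_pow_le (hB : BernsteinCondition μ f H) (hH : 0 < H)
    (hint : ∀ k : ℕ, Integrable (fun ω => |f ω| ^ k) μ) {K : ℝ} (hK : 0 ≤ K) (k : ℕ) :
    ∫ ω, K ^ k / k ! * |f ω| ^ (k + 3) ∂μ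
      ≤ 192 * H * (∫ ω, f ω ^ 2 ∂μ) * (2 * K * H) ^ k := by
  have hV : 0 ≤ ∫ ω, f ω ^ 2 ∂μ := integral_nonneg fun ω => sq_nonneg _
  have h_fact : ((k + 4)! : ℝ) ≤ 2 ^ (k + 4) * k ! * 24 := by
    exact_mod_cast factorial_add_le_two_pow_mul k 4
  have hk : (k ! : ℝ) ≠ 0 := by positivity
  rw [integral_const_mul]
  calc K ^ k / k ! * ∫ ω, |f ω| ^ (k + 1 + 2) ∂μ
      ≤ K ^ k / k ! * ((1 / 2) * (2 ^ (k + 4) * k ! * 24) * H ^ (k + 1) * ∫ ω, f ω ^ 2 ∂μ) := by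
        gcongr
        exact (hB.integral_abs_pow_le hH hint (k + 1)).trans (by gcongr)
    _ = _ := by
        field_simp
        rw [mul_pow, mul_pow]
        ring

theorem integrable_and_integral_abs_pow_three_mul_exp_le (hB : BernsteinCondition μ f H)
    (hH : 0 < H) (hint : ∀ k : ℕ, Integrable (fun ω => |f ω| ^ k) μ) {K : ℝ} (hK : 0 ≤ K)
    (hKH : 2 * K * H < 1) :
    Integrable (fun ω => |f ω| ^ 3 * Real.exp (K * |f ω|)) μ ∧
      ∫ ω, |f ω| ^ 3 * Real.exp (K * |f ω|) ∂μ
        ≤ 192 * H * (∫ ω, f ω ^ 2 ∂μ) * (1 - 2 * K * H)⁻¹ := by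
  have h_term := hB.integral_pow_div_factorial_mul_abs_pow_le hH hint hK
  have h_geom := (hasSum_geometric_of_lt_one (by positivity) hKH).mul_left
    (192 * H * ∫ ω, f ω ^ 2 ∂μ)
  obtain ⟨h_integrable, h_hasSum⟩ := integrable_and_hasSum_integral_of_nonneg
    (fun k => (hint (k + 3)).const_mul (K ^ k / k !)) (fun k ω => by positivity)
    (fun ω => Real.hasSum_pow_mul_exp 3 K |f ω|)
    (h_geom.summable.of_nonneg_of_le (fun k => integral_nonneg fun ω => by positivity) h_term)
  exact ⟨h_integrable, hasSum_le h_term h_hasSum h_geom⟩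

end BernsteinCondition

theorem bernstein_implies_sakhanenko_general {Ω : Type*} [MeasurableSpace Ω] {μ : Measure Ω}
    (η : Ω → ℝ)
    (hint : ∀ k : ℕ, Integrable (fun ω => η ω ^ k) μ)
    (H : ℝ) (hH : 0 < H)
    (hB : ∀ k : ℕ, 3 ≤ k →
      |∫ ω, η ω ^ k ∂μ| ≤ (1 / 2) * (Nat.factorial k : ℝ) * H ^ (k - 2) * ∫ ω, η ω ^ 2 ∂μ) :
    ∃ K > 0, Integrable (fun ω => |η ω| ^ 3 * Real.exp (K * |η ω|)) μ ∧
      K * ∫ ω, |η ω| ^ 3 * Real.exp (K * |η ω|) ∂μ ≤ ∫ ω, η ω ^ 2 ∂μ := by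
  set V := ∫ ω, η ω ^ 2 ∂μ
  have hV : 0 ≤ V := integral_nonneg fun ω => sq_nonneg _
  have hint_abs (k : ℕ) : Integrable (fun ω => |η ω| ^ k) μ := by
    simpa only [abs_pow] using (hint k).abs
  set K := (256 * H)⁻¹ with hK_def
  have hK : 0 < K := by positivity
  have hKH : 2 * K * H = 1 / 128 := by rw [hK_def]; field_simp; norm_num
  obtain ⟨h_integrable, h_integral⟩ :=
    BernsteinCondition.integrable_and_integral_abs_pow_three_mul_exp_le hB hH hint_abs hK.le
      (by rw [hKH]; norm_num)
  refine ⟨K, hK, h_integrable, ?_⟩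
  calc K * ∫ ω, |η ω| ^ 3 * Real.exp (K * |η ω|) ∂μ
      ≤ K * (192 * H * V * (1 - 2 * K * H)⁻¹) := by gcongr
    _ = 96 / 127 * V := by
        rw [hKH]
        linear_combination (96 * V * (1 - 1 / 128)⁻¹) * hKH
    _ ≤ V := by linarith

theorem bernstein_implies_sakhanenko {Ω : Type*} [MeasurableSpace Ω] {μ : Measure Ω}
    [IsProbabilityMeasure μ] (η : Ω → ℝ)
    (hint : ∀ k : ℕ, Integrable (fun ω => η ω ^ k) μ)
    (hmean : ∫ ω, η ω ∂μ = 0)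
    (H : ℝ) (hH : 0 < H)
    (hB : ∀ k : ℕ, 3 ≤ k →
      |∫ ω, η ω ^ k ∂μ| ≤ (1 / 2) * (Nat.factorial k : ℝ) * H ^ (k - 2) * ∫ ω, η ω ^ 2 ∂μ) :
    ∃ K > 0, Integrable (fun ω => |η ω| ^ 3 * Real.exp (K * |η ω|)) μ ∧
      K * ∫ ω, |η ω| ^ 3 * Real.exp (K * |η ω|) ∂μ ≤ ∫ ω, η ω ^ 2 ∂μ :=
  bernstein_implies_sakhanenko_general η hint H hH hB
end

section
/- Let ξ be a real random variable with E[ξ | 𝒢] = 0 satisfying the conditional Bernstein condition with parameter ε ∈ (0,1/2]. Then for each α ∈ (0,1) there is a constant c_α such that for all 0 ≤ λ ≤ α ε^{−1}: E[e^{λξ} | 𝒢] ≤ 1 + c_α (λε)² almost surely. -/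
/-
Conditional Jensen, `E[ξ²|𝒢]² ≤ E[ξ⁴|𝒢]`, together with the Bernstein condition for `k = 4` gives
`E[ξ²|𝒢] ≤ 12 ε²`, and then the Bernstein condition gives `|E[ξ^k|𝒢]| ≤ 6 k! ε^k` for all `k ≥ 2`.
Taking expectations bounds the even moments; interpolating the odd absolute moments between
neighbouring even ones then makes `∑ λ^k E|ξ|^k / k!` finite for `λε < 1`. This justifies
conditioning the exponential series term by term:
`E[e^{λξ}|𝒢] = 1 + λ E[ξ|𝒢] + ∑_{k ≥ 2} λ^k E[ξ^k|𝒢] / k! ≤ 1 + 6 (λε)² / (1 - λε)`,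
so `c_α = 6 / (1 - α)` works.
-/

open MeasureTheory ProbabilityTheory Filter
open scoped Nat ENNReal

def CondBernstein {Ω : Type*} {m0 : MeasurableSpace Ω} (μ : Measure Ω) (m : MeasurableSpace Ω)
    (ξ : Ω → ℝ) (ε : ℝ) : Prop :=
  ∀ k : ℕ, 3 ≤ k → ∀ᵐ ω ∂μ,
    |(μ[fun ω => ξ ω ^ k|m]) ω| ≤ (1 / 2) * (k ! : ℝ) * ε ^ (k - 2) * (μ[fun ω => ξ ω ^ 2|m]) ω

-- The weight `ε` keeps the power of `ε` in the resulting moment bound equal to the exponent.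
lemma abs_pow_two_mul_add_one_le {ε : ℝ} (hε : 0 < ε) (x : ℝ) (j : ℕ) :
    |x| ^ (2 * j + 1) ≤ (ε ^ 2 * x ^ (2 * j) + x ^ (2 * j + 2)) / (2 * ε) := by
  rw [← (even_two_mul j).pow_abs, ← (show Even (2 * j + 2) from ⟨j + 1, by ring⟩).pow_abs,
    le_div_iff₀ (by positivity), pow_succ, pow_add]
  nlinarith [mul_nonneg (pow_nonneg (abs_nonneg x) (2 * j)) (sq_nonneg (|x| - ε))]

section AbsoluteMoments

variable {Ω : Type*} {m0 : MeasurableSpace Ω} {μ : Measure Ω} {ξ : Ω → ℝ} {ε M : ℝ}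

lemma integral_abs_pow_le_of_integral_even_pow_le (hε : 0 < ε)
    (hint : ∀ j, Integrable (fun ω => ξ ω ^ (2 * j)) μ)
    (hmom : ∀ j, ∫ ω, ξ ω ^ (2 * j) ∂μ ≤ M * ((2 * j)! : ℝ) * ε ^ (2 * j)) (k : ℕ) :
    ∫ ω, |ξ ω| ^ k ∂μ ≤ M * ((k + 1)! : ℝ) * ε ^ k := by
  have hM : 0 ≤ M := by
    have h0 := hmom 0
    simp only [mul_zero, pow_zero, integral_const, smul_eq_mul, mul_one, Nat.factorial_zero,
      Nat.cast_one] at h0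
    exact measureReal_nonneg.trans h0
  obtain ⟨j, rfl | rfl⟩ := Nat.even_or_odd' k
  · calc ∫ ω, |ξ ω| ^ (2 * j) ∂μ = ∫ ω, ξ ω ^ (2 * j) ∂μ := by
          simp only [(even_two_mul j).pow_abs]
      _ ≤ M * ((2 * j)! : ℝ) * ε ^ (2 * j) := hmom j
      _ ≤ M * ((2 * j + 1)! : ℝ) * ε ^ (2 * j) := by
          gcongr
          omega
  · have hint' : Integrable (fun ω => ξ ω ^ (2 * j + 2)) μ := hint (j + 1)
    have hbound := integral_mono_of_nonneg (ae_of_all μ fun ω => by positivity)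
      ((((hint j).const_mul (ε ^ 2)).add hint').div_const (2 * ε))
      (ae_of_all μ fun ω => abs_pow_two_mul_add_one_le hε (ξ ω) j)
    simp only [Pi.add_apply] at hbound
    rw [integral_div, integral_add ((hint j).const_mul _) hint', integral_const_mul] at hbound
    refine hbound.trans ?_
    rw [div_le_iff₀ (by positivity)]
    have hfac : ((2 * j)! : ℝ) ≤ ((2 * j + 2)! : ℝ) := by
      exact_mod_cast Nat.factorial_le (by omega)
    have h1 := hmom j
    have h2 := hmom (j + 1)
    rw [show 2 * (j + 1) = 2 * j + 2 by ring] at h2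
    calc ε ^ 2 * ∫ ω, ξ ω ^ (2 * j) ∂μ + ∫ ω, ξ ω ^ (2 * j + 2) ∂μ
        ≤ ε ^ 2 * (M * ((2 * j)! : ℝ) * ε ^ (2 * j))
            + M * ((2 * j + 2)! : ℝ) * ε ^ (2 * j + 2) := by
          gcongr
      _ ≤ M * ((2 * j + 1 + 1)! : ℝ) * ε ^ (2 * j + 1) * (2 * ε) := by
          have := mul_le_mul_of_nonneg_left hfac (by positivity : 0 ≤ M * ε ^ (2 * j + 2))
          ring_nf at this ⊢
          linarith

lemma tsum_lintegral_enorm_exp_series_ne_top {l : ℝ} (hl : 0 ≤ l) (hε : 0 < ε)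
    (hlε : l * ε < 1) (hint : ∀ k, Integrable (fun ω => ξ ω ^ k) μ)
    (hmom : ∀ j, ∫ ω, ξ ω ^ (2 * j) ∂μ ≤ M * ((2 * j)! : ℝ) * ε ^ (2 * j)) :
    ∑' k, ∫⁻ ω, ‖l ^ k / (k ! : ℝ) * ξ ω ^ k‖ₑ ∂μ ≠ ∞ := by
  have habs := integral_abs_pow_le_of_integral_even_pow_le hε (fun j => hint (2 * j)) hmom
  have hM : 0 ≤ M := by
    simpa using (integral_nonneg fun ω => (by positivity : (0 : ℝ) ≤ |ξ ω| ^ 0)).trans (habs 0)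
  have hterm : ∀ k, ∫⁻ ω, ‖l ^ k / (k ! : ℝ) * ξ ω ^ k‖ₑ ∂μ
      ≤ ENNReal.ofReal (M * ((k : ℝ) + 1) * (l * ε) ^ k) := fun k => by
    rw [← ofReal_integral_norm_eq_lintegral_enorm ((hint k).const_mul _)]
    refine ENNReal.ofReal_le_ofReal ?_
    simp only [norm_mul, norm_div, norm_pow, Real.norm_eq_abs, abs_of_nonneg hl, Nat.abs_cast]
    rw [integral_const_mul]
    calc l ^ k / (k ! : ℝ) * ∫ ω, |ξ ω| ^ k ∂μ
        ≤ l ^ k / (k ! : ℝ) * (M * ((k + 1)! : ℝ) * ε ^ k) := by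
          gcongr
          exact habs k
      _ = M * ((k : ℝ) + 1) * (l * ε) ^ k := by
          rw [Nat.factorial_succ]
          push_cast
          field_simp
          ring
  have hsum : Summable fun k : ℕ => M * ((k : ℝ) + 1) * (l * ε) ^ k := by
    have hr : ‖l * ε‖ < 1 := by rwa [Real.norm_of_nonneg (by positivity)]
    have := ((summable_pow_mul_geometric_of_norm_lt_one 1 hr).add
      (summable_geometric_of_norm_lt_one hr)).mul_left M
    refine this.congr fun k => ?_
    ring
  refine ne_top_of_le_ne_top ?_ (ENNReal.tsum_le_tsum hterm)
  rw [← ENNReal.ofReal_tsum_of_nonneg (fun k => by positivity) hsum]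
  exact ENNReal.ofReal_ne_top

end AbsoluteMoments

section ConditionalMoments

variable {Ω : Type*} {m m0 : MeasurableSpace Ω} {μ : Measure[m0] Ω} {ξ : Ω → ℝ} {ε : ℝ}

lemma sq_condExp_ae_le_condExp_sq [IsFiniteMeasure μ] (hm : m ≤ m0) {X : Ω → ℝ}
    (hX : MemLp X 2 μ) : μ[X|m] ^ 2 ≤ᵐ[μ] μ[X ^ 2|m] := by
  filter_upwards [condVar_ae_eq_condExp_sq_sub_sq_condExp hm hX,
    condExp_nonneg (m := m) (f := (X - μ[X|m]) ^ 2) (ae_of_all μ fun ω => sq_nonneg _)]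
    with ω hvar hnonneg
  simp only [condVar, Pi.sub_apply, Pi.zero_apply, Pi.pow_apply] at hvar hnonneg ⊢
  linarith

lemma condExp_sq_ae_le_of_condBernstein [IsFiniteMeasure μ] (hm : m ≤ m0)
    (h2 : Integrable (fun ω => ξ ω ^ 2) μ) (h4 : Integrable (fun ω => ξ ω ^ 4) μ)
    (hξ : CondBernstein μ m ξ ε) :
    ∀ᵐ ω ∂μ, (μ[fun ω => ξ ω ^ 2|m]) ω ≤ 12 * ε ^ 2 := by
  have hsq : (fun ω => ξ ω ^ 2) ^ 2 = fun ω => ξ ω ^ 4 := by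
    funext ω
    simp only [Pi.pow_apply]
    ring
  have hL2 : MemLp (fun ω => ξ ω ^ 2) 2 μ :=
    (memLp_two_iff_integrable_sq h2.aestronglyMeasurable).2 (by simpa only [← pow_mul] using h4)
  filter_upwards [sq_condExp_ae_le_condExp_sq hm hL2, hξ 4 (by norm_num),
    condExp_nonneg (m := m) (ae_of_all μ fun ω => sq_nonneg (ξ ω))] with ω hjensen hbern hnonneg
  rw [hsq] at hjensen
  simp only [Pi.pow_apply, Pi.zero_apply] at hjensen hnonneg
  norm_num [Nat.factorial] at hbern
  nlinarith [le_abs_self ((μ[fun ω => ξ ω ^ 4|m]) ω)]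

lemma abs_condExp_pow_ae_le_of_condBernstein [IsFiniteMeasure μ] (hm : m ≤ m0) (hε : 0 ≤ ε)
    (h2 : Integrable (fun ω => ξ ω ^ 2) μ) (h4 : Integrable (fun ω => ξ ω ^ 4) μ)
    (hξ : CondBernstein μ m ξ ε) :
    ∀ᵐ ω ∂μ, ∀ k, 2 ≤ k → |(μ[fun ω => ξ ω ^ k|m]) ω| ≤ 6 * (k ! : ℝ) * ε ^ k := by
  have hsq := condExp_sq_ae_le_of_condBernstein hm h2 h4 hξ
  refine ae_all_iff.2 fun k => eventually_imp_distrib_left.2 fun hk => ?_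
  obtain rfl | hk3 := hk.eq_or_lt
  · filter_upwards [hsq, condExp_nonneg (m := m) (ae_of_all μ fun ω => sq_nonneg (ξ ω))]
      with ω hsq hnonneg
    simp only [Pi.zero_apply] at hnonneg
    rw [abs_of_nonneg hnonneg]
    norm_num [Nat.factorial]
    linarith
  filter_upwards [hsq, hξ k hk3] with ω hsq hbern
  calc |(μ[fun ω => ξ ω ^ k|m]) ω|
      ≤ 1 / 2 * (k ! : ℝ) * ε ^ (k - 2) * (μ[fun ω => ξ ω ^ 2|m]) ω := hbern
    _ ≤ 1 / 2 * (k ! : ℝ) * ε ^ (k - 2) * (12 * ε ^ 2) := by gcongr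
    _ = 6 * (k ! : ℝ) * ε ^ k := by
        rw [show k = k - 2 + 2 by omega, pow_add, Nat.add_sub_cancel]
        ring

lemma integral_even_pow_le_of_condBernstein [IsProbabilityMeasure μ] (hm : m ≤ m0) (hε : 0 ≤ ε)
    (h2 : Integrable (fun ω => ξ ω ^ 2) μ) (h4 : Integrable (fun ω => ξ ω ^ 4) μ)
    (hξ : CondBernstein μ m ξ ε) (j : ℕ) :
    ∫ ω, ξ ω ^ (2 * j) ∂μ ≤ 6 * ((2 * j)! : ℝ) * ε ^ (2 * j) := by
  obtain rfl | hj := Nat.eq_zero_or_pos j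
  · norm_num
  rw [← integral_condExp hm]
  calc ∫ ω, (μ[fun ω => ξ ω ^ (2 * j)|m]) ω ∂μ
      ≤ ∫ ω, |(μ[fun ω => ξ ω ^ (2 * j)|m]) ω| ∂μ := integral_mono integrable_condExp
        integrable_condExp.abs fun ω => le_abs_self _
    _ ≤ ∫ _, 6 * ((2 * j)! : ℝ) * ε ^ (2 * j) ∂μ := integral_mono_ae integrable_condExp.abs
        (integrable_const _) <| by
          filter_upwards [abs_condExp_pow_ae_le_of_condBernstein hm hε h2 h4 hξ] with ω hω
          exact hω _ (by omega)
    _ = 6 * ((2 * j)! : ℝ) * ε ^ (2 * j) := by simp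

lemma condExp_exp_mul_ae_eq_tsum {l : ℝ} (hint : ∀ k, Integrable (fun ω => ξ ω ^ k) μ)
    (hfin : ∑' k, ∫⁻ ω, ‖l ^ k / (k ! : ℝ) * ξ ω ^ k‖ₑ ∂μ ≠ ∞) :
    μ[fun ω => Real.exp (l * ξ ω)|m]
      =ᵐ[μ] fun ω => ∑' k, l ^ k / (k ! : ℝ) * (μ[fun ω => ξ ω ^ k|m]) ω := by
  have hexp : (fun ω => Real.exp (l * ξ ω)) = fun ω => ∑' k, l ^ k / (k ! : ℝ) * ξ ω ^ k := by
    funext ω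
    rw [Real.exp_eq_exp_ℝ, NormedSpace.exp_eq_tsum_div]
    exact tsum_congr fun k => by ring
  have hterm : ∀ᵐ ω ∂μ, ∀ k, (μ[fun ω => l ^ k / (k ! : ℝ) * ξ ω ^ k|m]) ω
      = l ^ k / (k ! : ℝ) * (μ[fun ω => ξ ω ^ k|m]) ω :=
    ae_all_iff.2 fun k => condExp_smul (l ^ k / (k ! : ℝ)) (fun ω => ξ ω ^ k) m
  rw [hexp]
  filter_upwards [condExp_tsum (m := m) (fun k => ((hint k).const_mul _).aestronglyMeasurable) hfin,
    hterm] with ω htsum hk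
  rw [htsum]
  exact tsum_congr hk

end ConditionalMoments

lemma tsum_le_one_add_of_abs_le_geometric {a : ℕ → ℝ} {C r : ℝ} (hr0 : 0 ≤ r) (hr1 : r < 1)
    (h0 : a 0 = 1) (h1 : a 1 = 0) (h : ∀ k, 2 ≤ k → |a k| ≤ C * r ^ k) :
    ∑' k, a k ≤ 1 + C * r ^ 2 / (1 - r) := by
  have hshift : ∀ k, |a (k + 2)| ≤ C * r ^ 2 * r ^ k := fun k => by
    rw [mul_assoc, ← pow_add, add_comm 2 k]
    exact h (k + 2) (by omega)
  have hgeom : Summable fun k => C * r ^ 2 * r ^ k :=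
    (summable_geometric_of_lt_one hr0 hr1).mul_left _
  have hsum : Summable fun k => a (k + 2) := hgeom.of_norm_bounded hshift
  rw [← ((summable_nat_add_iff 2).1 hsum).sum_add_tsum_nat_add 2]
  simp only [Finset.sum_range_succ, Finset.sum_range_zero, h0, h1, zero_add, add_zero]
  gcongr
  calc ∑' k, a (k + 2) ≤ ∑' k, C * r ^ 2 * r ^ k :=
        hsum.tsum_le_tsum (fun k => (le_abs_self _).trans (hshift k)) hgeom
    _ = C * r ^ 2 / (1 - r) := by
        rw [tsum_mul_left, tsum_geometric_of_lt_one hr0 hr1, div_eq_mul_inv]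

theorem cond_mgf_upper_bound (α : ℝ) (hα : α ∈ Set.Ioo (0 : ℝ) 1) :
    ∃ c > 0, ∀ (Ω : Type) (m0 : MeasurableSpace Ω) (μ : Measure Ω),
      IsProbabilityMeasure μ →
      ∀ (m : MeasurableSpace Ω), m ≤ m0 →
      ∀ (ξ : Ω → ℝ) (ε : ℝ),
      ε ∈ Set.Ioc (0 : ℝ) (1 / 2) →
      (∀ k : ℕ, Integrable (fun ω => ξ ω ^ k) μ) →
      μ[ξ|m] =ᵐ[μ] 0 →
      (∀ k : ℕ, 3 ≤ k → ∀ᵐ ω ∂μ,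
        |(μ[fun ω => ξ ω ^ k|m]) ω| ≤
          (1 / 2) * (Nat.factorial k : ℝ) * ε ^ (k - 2) * (μ[fun ω => ξ ω ^ 2|m]) ω) →
      ∀ l : ℝ, 0 ≤ l → l ≤ α / ε →
      Integrable (fun ω => Real.exp (l * ξ ω)) μ →
      ∀ᵐ ω ∂μ, (μ[fun ω => Real.exp (l * ξ ω)|m]) ω ≤ 1 + c * (l * ε) ^ 2 := by
  obtain ⟨hα0, hα1⟩ := hα
  refine ⟨6 / (1 - α), div_pos (by norm_num) (by linarith), ?_⟩
  rintro Ω m0 μ _ m hm ξ ε ⟨hε, -⟩ hint hmean hξ l hl hlα -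
  have hlε : l * ε ≤ α := (le_div_iff₀ hε).1 hlα
  have hfin := tsum_lintegral_enorm_exp_series_ne_top hl hε (by linarith) hint
    (integral_even_pow_le_of_condBernstein hm hε.le (hint 2) (hint 4) hξ)
  filter_upwards [condExp_exp_mul_ae_eq_tsum hint hfin, hmean,
    abs_condExp_pow_ae_le_of_condBernstein hm hε.le (hint 2) (hint 4) hξ] with ω hexp hmean hmom
  rw [hexp]
  calc _ ≤ 1 + 6 * (l * ε) ^ 2 / (1 - l * ε) :=
        tsum_le_one_add_of_abs_le_geometric (by positivity) (by linarith) ?_ ?_ fun k hk => ?_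
    _ ≤ 1 + 6 / (1 - α) * (l * ε) ^ 2 := by
        rw [div_mul_eq_mul_div]
        gcongr
  · simp [condExp_const hm]
  · simp [hmean]
  · rw [abs_mul, abs_of_nonneg (by positivity)]
    calc l ^ k / (k ! : ℝ) * |(μ[fun ω => ξ ω ^ k|m]) ω|
        ≤ l ^ k / (k ! : ℝ) * (6 * (k ! : ℝ) * ε ^ k) := by gcongr; exact hmom k hk
      _ = 6 * (l * ε) ^ k := by
          field_simp
          ring
end

section
/- Let 0 ≤ λ̄ ≤ x and suppose x − λ̄ ≤ Δ with Δ ≥ 0. Then 1 ≤ (1 − Φ(λ̄))/(1 − Φ(x)) ≤ 1 + √(2π)(1+x)(x − λ̄) e^{(x² − λ̄²)/2}; in particular there is an absolute constant c such that (1 − Φ(λ̄))/(1 − Φ(x)) ≤ exp{c(1+x²)Δ} whenever x ≥ 1. -/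
open MeasureTheory Set Real Filter

lemma gauss_integrable : Integrable (fun t : ℝ => Real.exp (-t ^ 2 / 2)) := by
  have := integrable_exp_neg_mul_sq (by norm_num : (0:ℝ) < 1/2)
  convert this using 2 with t
  ring_nf

noncomputable def G (x : ℝ) : ℝ := ∫ t in Set.Ioi x, Real.exp (-t ^ 2 / 2)

lemma G_eq (x : ℝ) : 1 - stdNormalCDF x = (Real.sqrt (2 * Real.pi))⁻¹ * G x := by
  have hs : Real.sqrt (2 * Real.pi) ≠ 0 := by positivity
  have htot : (∫ t in Set.Iic x, Real.exp (-t ^ 2 / 2)) + G x = Real.sqrt (2 * Real.pi) := by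
    rw [G, intervalIntegral.integral_Iic_add_Ioi gauss_integrable.integrableOn gauss_integrable.integrableOn]
    have := integral_gaussian (1/2 : ℝ)
    rw [show Real.pi / (1/2) = 2 * Real.pi by ring] at this
    rw [← this]
    congr 1 with t; ring_nf
  have hG : G x = Real.sqrt (2 * Real.pi) - ∫ t in Set.Iic x, Real.exp (-t ^ 2 / 2) := by
    linarith
  unfold stdNormalCDF
  rw [hG, mul_sub, inv_mul_cancel₀ hs]

lemma hasDerivAt_aux (t : ℝ) (ht : (0:ℝ) ≤ t) :
    HasDerivAt (fun t : ℝ => -(Real.exp (-t ^ 2 / 2) * (1 + t)⁻¹))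
      (Real.exp (-t ^ 2 / 2) * (t ^ 2 + t + 1) / (1 + t) ^ 2) t := by
  have h1 : (1 + t) ≠ 0 := by linarith
  have hpow := ((hasDerivAt_pow 2 t).neg).div_const 2
  have he := (Real.hasDerivAt_exp _).comp t hpow
  have hi := ((hasDerivAt_id t).const_add 1).inv h1
  have := (he.mul hi).neg
  refine this.congr_deriv ?_
  simp only [Pi.neg_apply, Pi.inv_apply, Function.comp_apply, id]
  push_cast
  field_simp
  ring

lemma tendsto_aux : Tendsto (fun t : ℝ => -(Real.exp (-t ^ 2 / 2) * (1 + t)⁻¹)) atTop (nhds 0) := by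
  have h1 : Tendsto (fun t : ℝ => Real.exp (-t ^ 2 / 2)) atTop (nhds 0) := by
    apply Real.tendsto_exp_atBot.comp
    apply Filter.Tendsto.atBot_div_const (by norm_num : (0:ℝ) < 2)
    exact tendsto_neg_atBot_iff.mpr (tendsto_pow_atTop (by norm_num))
  have h2 : Tendsto (fun t : ℝ => (1 + t)⁻¹) atTop (nhds 0) := by
    apply Tendsto.inv_tendsto_atTop
    exact tendsto_atTop_add_const_left _ 1 tendsto_id
  simpa using (h1.mul h2).neg

lemma G_lower (x : ℝ) (hx : 0 ≤ x) : Real.exp (-x ^ 2 / 2) * (1 + x)⁻¹ ≤ G x := by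
  set f' : ℝ → ℝ := fun t => Real.exp (-t ^ 2 / 2) * (t ^ 2 + t + 1) / (1 + t) ^ 2 with hf'
  have hle : ∀ t ∈ Set.Ioi x, f' t ≤ Real.exp (-t ^ 2 / 2) := by
    intro t ht
    have ht0 : (0:ℝ) ≤ t := le_trans hx (le_of_lt ht)
    have h1 : (0:ℝ) < (1 + t) ^ 2 := by positivity
    rw [hf', div_le_iff₀ h1]
    have : t ^ 2 + t + 1 ≤ (1 + t) ^ 2 := by nlinarith
    nlinarith [Real.exp_pos (-t ^ 2 / 2)]
  have hnn : ∀ t ∈ Set.Ioi x, 0 ≤ f' t := by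
    intro t ht
    have ht0 : (0:ℝ) ≤ t := le_trans hx (le_of_lt ht)
    have : (0:ℝ) < 1 + t := by linarith
    positivity
  have hcont : ContinuousOn f' (Set.Ioi x) := by
    apply ContinuousOn.div
    · exact (Real.continuous_exp.comp (by continuity)).continuousOn.mul (by fun_prop)
    · fun_prop
    · intro t ht
      have : (0:ℝ) ≤ t := le_trans hx (le_of_lt ht)
      positivity
  have hmeas : AEStronglyMeasurable f' (volume.restrict (Set.Ioi x)) :=
    hcont.aestronglyMeasurable measurableSet_Ioi
  have hint : IntegrableOn f' (Set.Ioi x) := by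
    apply Integrable.mono' (gauss_integrable.integrableOn) hmeas
    rw [ae_restrict_iff' measurableSet_Ioi]
    filter_upwards with t ht
    rw [Real.norm_eq_abs, abs_of_nonneg (hnn t ht)]
    exact hle t ht
  have hftc : ∫ t in Set.Ioi x, f' t = 0 - (-(Real.exp (-x ^ 2 / 2) * (1 + x)⁻¹)) := by
    apply integral_Ioi_of_hasDerivAt_of_tendsto' (fun t ht => hasDerivAt_aux t (le_trans hx ht))
      hint tendsto_aux
  have hmono : ∫ t in Set.Ioi x, f' t ≤ G x :=
    setIntegral_mono_on hint gauss_integrable.integrableOn measurableSet_Ioi hle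
  rw [hftc] at hmono
  linarith

lemma G_diff (lb x : ℝ) (h : lb ≤ x) :
    G lb = (∫ t in Set.Ioc lb x, Real.exp (-t ^ 2 / 2)) + G x := by
  rw [G, G, ← setIntegral_union (Set.Ioc_disjoint_Ioi le_rfl) measurableSet_Ioi
    gauss_integrable.integrableOn gauss_integrable.integrableOn,
    Set.Ioc_union_Ioi_eq_Ioi h]

lemma G_diff_le (lb x : ℝ) (h : lb ≤ x) (hlb : 0 ≤ lb) :
    G lb - G x ≤ (x - lb) * Real.exp (-lb ^ 2 / 2) := by
  rw [G_diff lb x h]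
  have : (∫ t in Set.Ioc lb x, Real.exp (-t ^ 2 / 2)) ≤
      ∫ _ in Set.Ioc lb x, Real.exp (-lb ^ 2 / 2) := by
    apply setIntegral_mono_on gauss_integrable.integrableOn ((integrableOn_const_iff (by finiteness)).mpr
      (Or.inr (by rw [Real.volume_Ioc]; exact ENNReal.ofReal_lt_top))) measurableSet_Ioc
    intro t ht
    apply Real.exp_le_exp.mpr
    have h1 : lb ≤ t := le_of_lt ht.1
    have : lb ^ 2 ≤ t ^ 2 := by nlinarith
    linarith
  rw [setIntegral_const, Real.volume_real_Ioc_of_le h] at this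
  simp only [smul_eq_mul] at this
  linarith

set_option maxHeartbeats 1000000 in
theorem gaussian_tail_ratio_compare :
    ∃ c > 0, ∀ lb x Δ : ℝ, 0 ≤ lb → lb ≤ x → x - lb ≤ Δ → 0 ≤ Δ →
      (1 ≤ (1 - stdNormalCDF lb) / (1 - stdNormalCDF x) ∧
        (1 - stdNormalCDF lb) / (1 - stdNormalCDF x) ≤
          1 + Real.sqrt (2 * Real.pi) * (1 + x) * (x - lb) *
            Real.exp ((x ^ 2 - lb ^ 2) / 2)) ∧
      (1 ≤ x →
        (1 - stdNormalCDF lb) / (1 - stdNormalCDF x) ≤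
          Real.exp (c * (1 + x ^ 2) * Δ)) := by
  refine ⟨7, by norm_num, fun lb x Δ hlb hlx hxd hd => ?_⟩
  have hx0 : (0:ℝ) ≤ x := le_trans hlb hlx
  have hs1 : (1:ℝ) ≤ Real.sqrt (2 * Real.pi) := by
    rw [show (1:ℝ) = Real.sqrt 1 by simp]
    apply Real.sqrt_le_sqrt
    nlinarith [Real.pi_gt_three]
  have hBpos : 0 < G x := lt_of_lt_of_le (by positivity) (G_lower x hx0)
  have hAB : G x ≤ G lb := by
    rw [G_diff lb x hlx]
    have : 0 ≤ ∫ t in Set.Ioc lb x, Real.exp (-t ^ 2 / 2) :=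
      setIntegral_nonneg measurableSet_Ioc fun t _ => (Real.exp_pos _).le
    linarith
  have hratio : (1 - stdNormalCDF lb) / (1 - stdNormalCDF x) = G lb / G x := by
    rw [G_eq, G_eq, mul_div_mul_left (G lb) (G x)
      (show (Real.sqrt (2 * Real.pi))⁻¹ ≠ 0 by positivity)]
  have hinv : (G x)⁻¹ ≤ (1 + x) * Real.exp (x ^ 2 / 2) := by
    have h1 : Real.exp (-x ^ 2 / 2) * (1 + x)⁻¹ ≤ G x := G_lower x hx0
    have h2 : (0:ℝ) < Real.exp (-x ^ 2 / 2) * (1 + x)⁻¹ := by positivity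
    calc (G x)⁻¹ ≤ (Real.exp (-x ^ 2 / 2) * (1 + x)⁻¹)⁻¹ := by
          exact inv_anti₀ h2 h1
      _ = (1 + x) * (Real.exp (-x ^ 2 / 2))⁻¹ := by rw [mul_inv, inv_inv]; ring
      _ = (1 + x) * Real.exp (x ^ 2 / 2) := by rw [← Real.exp_neg]; ring_nf
  have key : G lb / G x ≤ 1 + Real.sqrt (2 * Real.pi) * (1 + x) * (x - lb) *
      Real.exp ((x ^ 2 - lb ^ 2) / 2) := by
    have hd1 : G lb - G x ≤ (x - lb) * Real.exp (-lb ^ 2 / 2) := G_diff_le lb x hlx hlb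
    have : G lb / G x = 1 + (G lb - G x) * (G x)⁻¹ := by field_simp; ring
    rw [this]
    have h3 : (G lb - G x) * (G x)⁻¹ ≤
        ((x - lb) * Real.exp (-lb ^ 2 / 2)) * ((1 + x) * Real.exp (x ^ 2 / 2)) := by
      apply mul_le_mul hd1 hinv (inv_nonneg.mpr hBpos.le)
        (mul_nonneg (by linarith) (Real.exp_pos _).le)
    have h4 : ((x - lb) * Real.exp (-lb ^ 2 / 2)) * ((1 + x) * Real.exp (x ^ 2 / 2)) =
        (1 + x) * (x - lb) * Real.exp ((x ^ 2 - lb ^ 2) / 2) := by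
      rw [show (x ^ 2 - lb ^ 2) / 2 = -lb ^ 2 / 2 + x ^ 2 / 2 by ring, Real.exp_add]; ring
    have h5 : (1 + x) * (x - lb) * Real.exp ((x ^ 2 - lb ^ 2) / 2) ≤
        Real.sqrt (2 * Real.pi) * (1 + x) * (x - lb) * Real.exp ((x ^ 2 - lb ^ 2) / 2) := by
      nlinarith [Real.exp_pos ((x ^ 2 - lb ^ 2) / 2), mul_nonneg (mul_nonneg (by linarith : (0:ℝ) ≤ 1 + x) (by linarith : (0:ℝ) ≤ x - lb)) (Real.exp_pos ((x ^ 2 - lb ^ 2) / 2)).le]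
    linarith
  have h1le : 1 ≤ G lb / G x := (one_le_div hBpos).mpr hAB
  refine ⟨⟨by rwa [hratio], by rw [hratio]; exact key⟩, fun hx1 => ?_⟩
  rw [hratio]
  have hs3 : Real.sqrt (2 * Real.pi) ≤ 3 := by
    rw [show (3:ℝ) = Real.sqrt 9 by rw [show (9:ℝ) = 3^2 by norm_num, Real.sqrt_sq]; norm_num]
    apply Real.sqrt_le_sqrt
    nlinarith [Real.pi_le_four]
  set a := Real.sqrt (2 * Real.pi) * (1 + x) * (x - lb) with ha
  set b := (x ^ 2 - lb ^ 2) / 2 with hb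
  have ha0 : 0 ≤ a := by
    apply mul_nonneg (mul_nonneg (Real.sqrt_nonneg _) (by linarith)) (by linarith)
  have hb0 : 0 ≤ b := by
    rw [hb]; nlinarith
  have hab : a + b ≤ 7 * (1 + x ^ 2) * Δ := by
    have h1 : a ≤ 3 * (1 + x ^ 2) * Δ := by
      have hxx : 1 + x ≤ 1 + x ^ 2 := by nlinarith
      have hm : (1 + x) * (x - lb) ≤ (1 + x ^ 2) * Δ :=
        mul_le_mul hxx hxd (by linarith) (by nlinarith)
      have hnn : (0:ℝ) ≤ (1 + x) * (x - lb) := mul_nonneg (by linarith) (by linarith)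
      calc a = Real.sqrt (2 * Real.pi) * ((1 + x) * (x - lb)) := by rw [ha]; ring
        _ ≤ 3 * ((1 + x) * (x - lb)) := mul_le_mul_of_nonneg_right hs3 hnn
        _ ≤ 3 * ((1 + x ^ 2) * Δ) := by linarith
        _ = 3 * (1 + x ^ 2) * Δ := by ring
    have h2 : b ≤ (1 + x ^ 2) * Δ := by
      have e1 : (x + lb) * (x - lb) ≤ 2 * x * Δ :=
        mul_le_mul (by linarith) hxd (by linarith) (by linarith)
      have e2 : x * Δ ≤ (1 + x ^ 2) * Δ :=
        mul_le_mul_of_nonneg_right (by nlinarith [sq_nonneg (x - 1)]) hd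
      rw [hb]
      nlinarith
    linarith
  calc G lb / G x ≤ 1 + a * Real.exp b := key
    _ ≤ (1 + a) * Real.exp b := by nlinarith [Real.one_le_exp hb0]
    _ ≤ Real.exp a * Real.exp b := by
        nlinarith [Real.add_one_le_exp a, Real.exp_pos b]
    _ = Real.exp (a + b) := (Real.exp_add a b).symm
    _ ≤ Real.exp (7 * (1 + x ^ 2) * Δ) := Real.exp_le_exp.mpr hab
end
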